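/- arXiv:2003.06196 — 4 statements merged into one kernel-verified Lean document; each statement's English description precedes it below -/
import Mathlib

section
/- (Theorem 3.2: BIBO stability of neutral systems with time-varying delays.) Let M_inf, M_inf^d, M_inf^nom, M_inf^nomd ≥ 0 be constants such that for every bounded w : ℝ → ℂ^n and every neutral auxiliary solution z with input w for which z and ż are bounded, one has ‖z‖_∞ ≤ M_inf·‖w‖_∞ and ‖ż‖_∞ ≤ M_inf^d·‖w‖_∞. Set M'' = M_inf^d·( Σ_{j=1}^J μ_j‖A_j‖ + 2·Σ_{ℓ=1}^L ‖A_{−ℓ}‖ ). Assume M'' < 1 and M_inf·ε·‖h‖_∞·( 1 + ( Σ_j μ_j‖A_j‖ + 2·Σ_ℓ ‖A_{−ℓ}‖ )·M_inf^d·(1−M'')^{-1} ) < 1. Then there exists C ≥ 0, depending only on the data, such that for every bounded input u vanishing on (−∞,0], every neutral nominal solution v for u with ‖v‖_∞ ≤ M_inf^nom·‖u‖_∞ and ‖v̇‖_∞ ≤ M_inf^nomd·‖u‖_∞, and every solution x of the neutral time-varying system for u such that x and ẋ are bounded, one has ‖x‖_∞ ≤ C·‖u‖_∞. -/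
open MeasureTheory

/-- The supremum norm over `t > 0`. -/
noncomputable def supNorm {E : Type*} [NormedAddCommGroup E] (f : ℝ → E) : ℝ :=
  ⨆ t : Set.Ioi (0 : ℝ), ‖f (t : ℝ)‖

/-- A function `ℝ → E` is bounded. -/
def IsBddFun {E : Type*} [NormedAddCommGroup E] (f : ℝ → E) : Prop :=
  ∃ C, ∀ t, ‖f t‖ ≤ C

/-!
Subtracting the nominal right-hand side, a solution `x` of the time-varying system is an
auxiliary solution whose input `w` collects the differences of the delayed terms, the
distributed delay over `[D, δ(t)]` and the input terms. As `x` is `‖ẋ‖∞`-Lipschitz and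
`|τ_j(t) - h_j| ≤ μ_j`, while each neutral difference is at most `2‖ẋ‖∞`,
`‖w‖∞ ≤ (Σ μ_j ‖A_j‖ + 2 Σ ‖A_{-ℓ}‖) ‖ẋ‖∞ + ε ‖h‖∞ ‖x‖∞ + (‖B‖ + Σ ‖B_k‖) ‖u‖∞`.
The auxiliary gains turn this into two small-gain inequalities: the one for `ẋ` is solved
because `M'' < 1`, and substituting it into the one for `x` bounds `‖x‖∞` by a multiple
of `‖u‖∞`.
-/

section SupNorm

variable {E : Type*} [NormedAddCommGroup E]

lemma supNorm_nonneg (f : ℝ → E) : 0 ≤ supNorm f :=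
  Real.iSup_nonneg fun _ => norm_nonneg _

lemma supNorm_le {f : ℝ → E} {C : ℝ} (hf : ∀ t > 0, ‖f t‖ ≤ C) : supNorm f ≤ C :=
  haveI : Nonempty (Set.Ioi (0 : ℝ)) := ⟨⟨1, Set.mem_Ioi.2 one_pos⟩⟩
  ciSup_le fun t => hf t t.2

lemma IsBddFun.norm_le_supNorm {f : ℝ → E} (hf : IsBddFun f) (hf0 : ∀ t ≤ 0, f t = 0)
    (s : ℝ) : ‖f s‖ ≤ supNorm f := by
  rcases le_or_gt s 0 with hs | hs
  · simpa [hf0 s hs] using supNorm_nonneg f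
  · obtain ⟨C, hC⟩ := hf
    exact le_ciSup (f := fun t : Set.Ioi (0 : ℝ) => ‖f t‖)
      ⟨C, by rintro _ ⟨t, rfl⟩; exact hC t⟩ ⟨s, hs⟩

end SupNorm

lemma IsCompact.norm_le_iSup_of_continuousOn {E : Type*} [NormedAddCommGroup E] {K : Set ℝ}
    (hK : IsCompact K) {g : ℝ → E} (hg : ContinuousOn g K) {θ : ℝ} (hθ : θ ∈ K) :
    ‖g θ‖ ≤ ⨆ s : K, ‖g s‖ := by
  have hbdd := (hK.image_of_continuousOn hg.norm).bddAbove
  rw [Set.image_eq_range] at hbdd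
  exact le_ciSup hbdd ⟨θ, hθ⟩

section Analysis

variable {E : Type*} [NormedAddCommGroup E] [NormedSpace ℝ E]

lemma HasDerivAt.eq_zero_of_eqOn_Iic {f : ℝ → E} {f' : E} {a t : ℝ} (hf : HasDerivAt f f' t)
    (hf0 : ∀ s ≤ a, f s = 0) (ht : t ≤ a) : f' = 0 :=
  (uniqueDiffOn_Iic a t ht).eq_deriv _ hf.hasDerivWithinAt <|
    (hasDerivWithinAt_const t (Set.Iic a) (0 : E)).congr (fun s hs => hf0 s hs) (hf0 t ht)

lemma norm_sub_le_of_hasDerivAt_of_norm_le {f f' : ℝ → E} {C : ℝ}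
    (hf : ∀ t, HasDerivAt f (f' t) t) (hC : ∀ t, ‖f' t‖ ≤ C) (s r : ℝ) :
    ‖f s - f r‖ ≤ C * |s - r| := by
  simpa [Real.norm_eq_abs] using convex_univ.norm_image_sub_le_of_norm_hasDerivWithin_le
    (fun t _ => (hf t).hasDerivWithinAt) (fun t _ => hC t) (Set.mem_univ r) (Set.mem_univ s)

lemma norm_integral_smul_le {𝕜 : Type*} [NontriviallyNormedField 𝕜] [NormedSpace 𝕜 E]
    {g : ℝ → 𝕜} {f : ℝ → E} {M X c d : ℝ} (hg : ∀ θ ∈ Set.uIcc c d, ‖g θ‖ ≤ M) (hM : 0 ≤ M)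
    (hf : ∀ θ, ‖f θ‖ ≤ X) : ‖∫ θ in c..d, g θ • f θ‖ ≤ M * X * |d - c| :=
  intervalIntegral.norm_integral_le_of_norm_le_const fun θ hθ =>
    (norm_smul _ _).trans_le <|
      mul_le_mul (hg θ (Set.uIoc_subset_uIcc hθ)) (hf θ) (norm_nonneg _) hM

end Analysis

lemma norm_sum_apply_le {ι 𝕜 E F : Type*} [Fintype ι] [NontriviallyNormedField 𝕜]
    [SeminormedAddCommGroup E] [NormedSpace 𝕜 E] [SeminormedAddCommGroup F] [NormedSpace 𝕜 F]
    (T : ι → E →L[𝕜] F) {y : ι → E} {c : ι → ℝ} (hy : ∀ i, ‖y i‖ ≤ c i) :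
    ‖∑ i, T i (y i)‖ ≤ ∑ i, ‖T i‖ * c i :=
  (norm_sum_le _ _).trans <| Finset.sum_le_sum fun i _ => (T i).le_opNorm_of_le (hy i)

lemma le_of_small_gain {X X' W U Mi Md S ε M CB M'' : ℝ} (hMi : 0 ≤ Mi) (hMd : 0 ≤ Md)
    (hS : 0 ≤ S) (hX : X ≤ Mi * W) (hX' : X' ≤ Md * W) (hW : W ≤ S * X' + ε * M * X + CB * U)
    (hM'' : M'' = Md * S) (hM''1 : M'' < 1)
    (hsmall : Mi * ε * M * (1 + S * Md * (1 - M'')⁻¹) < 1) :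
    X ≤ (1 - Mi * ε * M * (1 + S * Md * (1 - M'')⁻¹))⁻¹
      * (Mi * (1 + S * Md * (1 - M'')⁻¹) * CB) * U := by
  have h1M'' : 0 < 1 - M'' := by linarith
  have hX'r : X' ≤ (1 - M'')⁻¹ * (Md * (ε * M * X + CB * U)) := by
    rw [le_inv_mul_iff₀ h1M'', hM'']
    linarith [mul_le_mul_of_nonneg_left hW hMd]
  have hWr : W ≤ (1 + S * Md * (1 - M'')⁻¹) * (ε * M * X + CB * U) :=
    calc W ≤ S * X' + (ε * M * X + CB * U) := by linarith
      _ ≤ S * ((1 - M'')⁻¹ * (Md * (ε * M * X + CB * U))) + (ε * M * X + CB * U) := by gcongr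
      _ = (1 + S * Md * (1 - M'')⁻¹) * (ε * M * X + CB * U) := by ring
  rw [mul_assoc, le_inv_mul_iff₀ (by linarith)]
  linarith [mul_le_mul_of_nonneg_left hWr hMi]

section Neutral

variable {E F : Type*} [NormedAddCommGroup E] [NormedSpace ℂ E]
  [NormedAddCommGroup F] [NormedSpace ℂ F] {J K L : ℕ}
  (A : E →L[ℂ] E) (Aj : Fin J → E →L[ℂ] E) (Am : Fin L → E →L[ℂ] E) (hd : Fin J → ℝ)
  (Hl : Fin L → ℝ) (h : ℝ → ℂ) (D : ℝ)

/-- The input with which `x` (with derivative `x'`) solves the auxiliary system. -/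
noncomputable def auxInput (x x' : ℝ → E) (t : ℝ) : E :=
  x' t + ∑ ℓ, Am ℓ (x' (t - Hl ℓ)) - A (x t) - ∑ j, Aj j (x (t - hd j))
    - ∫ θ in (0 : ℝ)..D, h θ • x (t - θ)

lemma auxInput_spec (x x' : ℝ → E) (t : ℝ) :
    x' t + ∑ ℓ, Am ℓ (x' (t - Hl ℓ)) = A (x t) + ∑ j, Aj j (x (t - hd j))
      + (∫ θ in (0 : ℝ)..D, h θ • x (t - θ)) + auxInput A Aj Am hd Hl h D x x' t := by
  simp only [auxInput]
  abel

variable {A Aj Am hd Hl h D}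

lemma isBddFun_auxInput {x x' : ℝ → E} {X X' M : ℝ} (hxX : ∀ s, ‖x s‖ ≤ X)
    (hx'X : ∀ s, ‖x' s‖ ≤ X') (hhM : ∀ θ ∈ Set.uIcc 0 D, ‖h θ‖ ≤ M) (hM : 0 ≤ M) :
    IsBddFun (auxInput A Aj Am hd Hl h D x x') :=
  ⟨X' + ∑ ℓ, ‖Am ℓ‖ * X' + ‖A‖ * X + ∑ j, ‖Aj j‖ * X + M * X * |D - 0|, fun t =>
    (norm_sub_le _ _).trans <| add_le_add ((norm_sub_le _ _).trans <| add_le_add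
      ((norm_sub_le _ _).trans <| add_le_add ((norm_add_le _ _).trans <| add_le_add (hx'X t)
        (norm_sum_apply_le Am fun _ => hx'X _)) (A.le_opNorm_of_le (hxX t)))
      (norm_sum_apply_le Aj fun _ => hxX _))
    (norm_integral_smul_le hhM hM fun _ => hxX _)⟩

variable {ε : ℝ} {x x' : ℝ → E} {t : ℝ} {τ : Fin J → ℝ} {γ : Fin L → ℝ} {δ : ℝ}

lemma auxInput_eq_of_solution (B : F →L[ℂ] E) (Bk : Fin K → F →L[ℂ] E) {u : ℝ → F}
    {σ : Fin K → ℝ} (hx : Continuous x) (hh : ContinuousOn h (Set.Icc 0 (D + ε)))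
    (hD : 0 ≤ D) (hε : 0 ≤ ε) (hδ : 0 ≤ δ ∧ δ ≤ D + ε)
    (heq : x' t + ∑ ℓ, Am ℓ (x' (t - γ ℓ)) = A (x t) + ∑ j, Aj j (x (t - τ j))
      + (∫ θ in (0 : ℝ)..δ, h θ • x (t - θ)) + B (u t) + ∑ k, Bk k (u (t - σ k))) :
    auxInput A Aj Am hd Hl h D x x' t
      = ∑ ℓ, Am ℓ (x' (t - Hl ℓ) - x' (t - γ ℓ)) + ∑ j, Aj j (x (t - τ j) - x (t - hd j))
        + (∫ θ in D..δ, h θ • x (t - θ)) + (B (u t) + ∑ k, Bk k (u (t - σ k))) := by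
  have hint : ∀ b ∈ Set.Icc 0 (D + ε),
      IntervalIntegrable (fun θ => h θ • x (t - θ)) volume 0 b := fun b hb =>
    ((hh.mono (by rw [Set.uIcc_of_le hb.1]; exact Set.Icc_subset_Icc le_rfl hb.2)).smul
      (hx.comp (continuous_const.sub continuous_id)).continuousOn).intervalIntegrable
  rw [← intervalIntegral.integral_interval_sub_left (hint δ hδ) (hint D ⟨hD, by linarith⟩)]
  simp only [auxInput, eq_sub_of_add_eq heq, map_sub, Finset.sum_sub_distrib]
  abel

lemma norm_auxInput_le (B : F →L[ℂ] E) (Bk : Fin K → F →L[ℂ] E) {u : ℝ → F} {σ : Fin K → ℝ}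
    {μ : Fin J → ℝ} {X X' M Uu : ℝ} (hx : ∀ s, HasDerivAt x (x' s) s) (hxX : ∀ s, ‖x s‖ ≤ X)
    (hx'X : ∀ s, ‖x' s‖ ≤ X') (huU : ∀ s, ‖u s‖ ≤ Uu)
    (hh : ContinuousOn h (Set.Icc 0 (D + ε))) (hhM : ∀ θ ∈ Set.Icc 0 (D + ε), ‖h θ‖ ≤ M)
    (hM : 0 ≤ M) (hε : 0 ≤ ε) (hεD : ε ≤ D) (hτ : ∀ j, hd j - μ j ≤ τ j ∧ τ j ≤ hd j + μ j)
    (hδ : D - ε ≤ δ ∧ δ ≤ D + ε)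
    (heq : x' t + ∑ ℓ, Am ℓ (x' (t - γ ℓ)) = A (x t) + ∑ j, Aj j (x (t - τ j))
      + (∫ θ in (0 : ℝ)..δ, h θ • x (t - θ)) + B (u t) + ∑ k, Bk k (u (t - σ k))) :
    ‖auxInput A Aj Am hd Hl h D x x' t‖
      ≤ ((∑ j, μ j * ‖Aj j‖) + 2 * ∑ ℓ, ‖Am ℓ‖) * X' + ε * M * X
        + (‖B‖ + ∑ k, ‖Bk k‖) * Uu := by
  have hX : 0 ≤ X := (norm_nonneg _).trans (hxX 0)
  have hD : 0 ≤ D := hε.trans hεD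
  have hδ₀ : 0 ≤ δ := by linarith [hδ.1]
  have hneutral := norm_sum_apply_le Am (y := fun ℓ => x' (t - Hl ℓ) - x' (t - γ ℓ))
    (c := fun _ => 2 * X') fun ℓ =>
      (norm_sub_le _ _).trans (by linarith [hx'X (t - Hl ℓ), hx'X (t - γ ℓ)])
  have hdelay := norm_sum_apply_le Aj (y := fun j => x (t - τ j) - x (t - hd j))
    (c := fun j => μ j * X') fun j => by
      refine (norm_sub_le_of_hasDerivAt_of_norm_le hx hx'X _ _).trans ?_
      rw [mul_comm]
      gcongr
      · exact (norm_nonneg _).trans (hx'X 0)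
      · rw [abs_le]; constructor <;> linarith [hτ j]
  have hdistributed : ‖∫ θ in D..δ, h θ • x (t - θ)‖ ≤ M * X * ε := by
    refine (norm_integral_smul_le (fun θ hθ => hhM θ ?_) hM fun _ => hxX _).trans ?_
    · exact ⟨(le_min hD hδ₀).trans hθ.1, hθ.2.trans (max_le (by linarith) hδ.2)⟩
    · gcongr
      rw [abs_le]; constructor <;> linarith
  have hinput := norm_add_le_of_le (B.le_opNorm_of_le (huU t))
    (norm_sum_apply_le Bk (c := fun _ => Uu) fun k => huU (t - σ k))
  rw [auxInput_eq_of_solution B Bk (continuous_iff_continuousAt.2 fun s => (hx s).continuousAt)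
    hh hD hε ⟨hδ₀, hδ.2⟩ heq]
  have hsum_delay : ∑ j, ‖Aj j‖ * (μ j * X') = (∑ j, μ j * ‖Aj j‖) * X' := by
    rw [Finset.sum_mul]; exact Finset.sum_congr rfl fun j _ => by ring
  simp only [← Finset.sum_mul, hsum_delay] at hneutral hdelay hinput
  linarith [norm_add₄_le (a := ∑ ℓ, Am ℓ (x' (t - Hl ℓ) - x' (t - γ ℓ)))
    (b := ∑ j, Aj j (x (t - τ j) - x (t - hd j))) (c := ∫ θ in D..δ, h θ • x (t - θ))
    (d := B (u t) + ∑ k, Bk k (u (t - σ k)))]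

end Neutral

theorem stmt_3_general (n p J K L : ℕ)
    (A : EuclideanSpace ℂ (Fin n) →L[ℂ] EuclideanSpace ℂ (Fin n))
    (Aj : Fin J → EuclideanSpace ℂ (Fin n) →L[ℂ] EuclideanSpace ℂ (Fin n))
    (Am : Fin L → EuclideanSpace ℂ (Fin n) →L[ℂ] EuclideanSpace ℂ (Fin n))
    (B : EuclideanSpace ℂ (Fin p) →L[ℂ] EuclideanSpace ℂ (Fin n))
    (Bk : Fin K → EuclideanSpace ℂ (Fin p) →L[ℂ] EuclideanSpace ℂ (Fin n))
    (D ε : ℝ) (hε0 : 0 ≤ ε) (hεD : ε ≤ D)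
    (hd μ : Fin J → ℝ) (hμ0 : ∀ j, 0 ≤ μ j)
    (T : Fin K → ℝ)
    (Hl : Fin L → ℝ)
    (h : ℝ → ℂ) (hcont : ContinuousOn h (Set.Icc 0 (D + ε)))
    (hNorm : ℝ) (hhNorm : hNorm = ⨆ θ : Set.Icc (0 : ℝ) (D + ε), ‖h (θ : ℝ)‖)
    (τ : Fin J → ℝ → ℝ)
    (hτb : ∀ j t, hd j - μ j ≤ τ j t ∧ τ j t ≤ hd j + μ j)
    (σ : Fin K → ℝ → ℝ)
    (γ : Fin L → ℝ → ℝ)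
    (δ : ℝ → ℝ) (hδb : ∀ t, D - ε ≤ δ t ∧ δ t ≤ D + ε)
    (Minf Minfd Minfnom Minfnomd : ℝ)
    (hMinf0 : 0 ≤ Minf) (hMinfd0 : 0 ≤ Minfd)
    -- gains of the neutral auxiliary system
    (haux : ∀ w z z' : ℝ → EuclideanSpace ℂ (Fin n),
      IsBddFun w →
      (∀ t, HasDerivAt z (z' t) t) → (∀ t ≤ (0 : ℝ), z t = 0) →
      (∀ t > (0 : ℝ), z' t + ∑ ℓ : Fin L, Am ℓ (z' (t - Hl ℓ))
        = A (z t) + ∑ j : Fin J, Aj j (z (t - hd j))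
          + (∫ θ in (0 : ℝ)..D, h θ • z (t - θ)) + w t) →
      IsBddFun z → IsBddFun z' →
      supNorm z ≤ Minf * supNorm w ∧ supNorm z' ≤ Minfd * supNorm w)
    (M'' : ℝ)
    (hM'' : M'' = Minfd * ((∑ j : Fin J, μ j * ‖Aj j‖)
      + 2 * ∑ ℓ : Fin L, ‖Am ℓ‖))
    (hM''1 : M'' < 1)
    (hsmall : Minf * ε * hNorm *
      (1 + ((∑ j : Fin J, μ j * ‖Aj j‖) + 2 * ∑ ℓ : Fin L, ‖Am ℓ‖)
        * Minfd * (1 - M'')⁻¹) < 1) :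
    ∃ C : ℝ, 0 ≤ C ∧
      ∀ u : ℝ → EuclideanSpace ℂ (Fin p), IsBddFun u → (∀ t ≤ (0 : ℝ), u t = 0) →
      ∀ v v' : ℝ → EuclideanSpace ℂ (Fin n),
        (∀ t, HasDerivAt v (v' t) t) → (∀ t ≤ (0 : ℝ), v t = 0) →
        -- `v` is the neutral nominal solution for `u`
        (∀ t > (0 : ℝ), v' t + ∑ ℓ : Fin L, Am ℓ (v' (t - Hl ℓ))
          = A (v t) + ∑ j : Fin J, Aj j (v (t - hd j))
            + (∫ θ in (0 : ℝ)..D, h θ • v (t - θ))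
            + B (u t) + ∑ k : Fin K, Bk k (u (t - T k))) →
        supNorm v ≤ Minfnom * supNorm u → supNorm v' ≤ Minfnomd * supNorm u →
      ∀ x x' : ℝ → EuclideanSpace ℂ (Fin n),
        (∀ t, HasDerivAt x (x' t) t) → (∀ t ≤ (0 : ℝ), x t = 0) →
        -- `x` solves the neutral time-varying delay system for `u`
        (∀ t > (0 : ℝ), x' t + ∑ ℓ : Fin L, Am ℓ (x' (t - γ ℓ t))
          = A (x t) + ∑ j : Fin J, Aj j (x (t - τ j t))
            + (∫ θ in (0 : ℝ)..(δ t), h θ • x (t - θ))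
            + B (u t) + ∑ k : Fin K, Bk k (u (t - σ k t))) →
        IsBddFun x → IsBddFun x' →
        supNorm x ≤ C * supNorm u := by
  set S := (∑ j : Fin J, μ j * ‖Aj j‖) + 2 * ∑ ℓ : Fin L, ‖Am ℓ‖
  set Q := 1 + S * Minfd * (1 - M'')⁻¹
  have hS : 0 ≤ S :=
    add_nonneg (Finset.sum_nonneg fun j _ => mul_nonneg (hμ0 j) (norm_nonneg _)) (by positivity)
  have hQ : 0 ≤ Q :=
    add_nonneg zero_le_one (mul_nonneg (mul_nonneg hS hMinfd0) (inv_nonneg.2 (by linarith)))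
  refine ⟨(1 - Minf * ε * hNorm * Q)⁻¹ * (Minf * Q * (‖B‖ + ∑ k, ‖Bk k‖)),
    mul_nonneg (inv_nonneg.2 (by linarith)) (by positivity), ?_⟩
  intro u hu hu0 v v' _ _ _ _ _ x x' hx hx0 hxeq hxb hxb'
  have hhM : ∀ θ ∈ Set.Icc 0 (D + ε), ‖h θ‖ ≤ hNorm := fun θ hθ =>
    hhNorm ▸ isCompact_Icc.norm_le_iSup_of_continuousOn hcont hθ
  have hNorm0 : 0 ≤ hNorm := (norm_nonneg _).trans (hhM 0 ⟨le_rfl, by linarith⟩)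
  have hxX := hxb.norm_le_supNorm hx0
  have hx'X := hxb'.norm_le_supNorm fun t ht => (hx t).eq_zero_of_eqOn_Iic hx0 ht
  have hhM₀ : ∀ θ ∈ Set.uIcc 0 D, ‖h θ‖ ≤ hNorm := fun θ hθ => by
    rw [Set.uIcc_of_le (hε0.trans hεD)] at hθ
    exact hhM θ ⟨hθ.1, by linarith [hθ.2]⟩
  obtain ⟨hXW, hX'W⟩ := haux _ x x' (isBddFun_auxInput hxX hx'X hhM₀ hNorm0) hx hx0
    (fun t _ => auxInput_spec A Aj Am hd Hl h D x x' t) hxb hxb'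
  have hW := supNorm_le (f := auxInput A Aj Am hd Hl h D x x') fun t ht =>
    norm_auxInput_le B Bk hx hxX hx'X
      (hu.norm_le_supNorm hu0) hcont hhM hNorm0 hε0 hεD (hτb · t) (hδb t) (hxeq t ht)
  exact le_of_small_gain hMinf0 hMinfd0 hS hXW hX'W hW hM'' hM''1 hsmall

/-- (Theorem 3.2: BIBO stability of neutral systems with time-varying delays.) -/
theorem stmt_3 (n p J K L : ℕ)
    (A : EuclideanSpace ℂ (Fin n) →L[ℂ] EuclideanSpace ℂ (Fin n))
    (Aj : Fin J → EuclideanSpace ℂ (Fin n) →L[ℂ] EuclideanSpace ℂ (Fin n))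
    (Am : Fin L → EuclideanSpace ℂ (Fin n) →L[ℂ] EuclideanSpace ℂ (Fin n))
    (B : EuclideanSpace ℂ (Fin p) →L[ℂ] EuclideanSpace ℂ (Fin n))
    (Bk : Fin K → EuclideanSpace ℂ (Fin p) →L[ℂ] EuclideanSpace ℂ (Fin n))
    -- Hypothesis (H)
    (hH : ∑ ℓ : Fin L, ‖Am ℓ‖ < 1)
    (D ε : ℝ) (hε0 : 0 ≤ ε) (hεD : ε ≤ D)
    (hd μ : Fin J → ℝ) (hμ0 : ∀ j, 0 ≤ μ j) (hμh : ∀ j, μ j ≤ hd j)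
    (T ν : Fin K → ℝ) (hν0 : ∀ k, 0 ≤ ν k) (hνT : ∀ k, ν k ≤ T k)
    (Hl η : Fin L → ℝ) (hη0 : ∀ ℓ, 0 ≤ η ℓ) (hηH : ∀ ℓ, η ℓ ≤ Hl ℓ)
    (h : ℝ → ℂ) (hcont : ContinuousOn h (Set.Icc 0 (D + ε)))
    (hNorm : ℝ) (hhNorm : hNorm = ⨆ θ : Set.Icc (0 : ℝ) (D + ε), ‖h (θ : ℝ)‖)
    (τ : Fin J → ℝ → ℝ) (hτm : ∀ j, Measurable (τ j))
    (hτb : ∀ j t, hd j - μ j ≤ τ j t ∧ τ j t ≤ hd j + μ j)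
    (σ : Fin K → ℝ → ℝ) (hσm : ∀ k, Measurable (σ k))
    (hσb : ∀ k t, T k - ν k ≤ σ k t ∧ σ k t ≤ T k + ν k)
    (γ : Fin L → ℝ → ℝ) (hγm : ∀ ℓ, Measurable (γ ℓ))
    (hγb : ∀ ℓ t, Hl ℓ - η ℓ ≤ γ ℓ t ∧ γ ℓ t ≤ Hl ℓ + η ℓ)
    (δ : ℝ → ℝ) (hδm : Measurable δ) (hδb : ∀ t, D - ε ≤ δ t ∧ δ t ≤ D + ε)
    (Minf Minfd Minfnom Minfnomd : ℝ)
    (hMinf0 : 0 ≤ Minf) (hMinfd0 : 0 ≤ Minfd)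
    (hMinfnom0 : 0 ≤ Minfnom) (hMinfnomd0 : 0 ≤ Minfnomd)
    -- gains of the neutral auxiliary system
    (haux : ∀ w z z' : ℝ → EuclideanSpace ℂ (Fin n),
      IsBddFun w →
      (∀ t, HasDerivAt z (z' t) t) → (∀ t ≤ (0 : ℝ), z t = 0) →
      (∀ t > (0 : ℝ), z' t + ∑ ℓ : Fin L, Am ℓ (z' (t - Hl ℓ))
        = A (z t) + ∑ j : Fin J, Aj j (z (t - hd j))
          + (∫ θ in (0 : ℝ)..D, h θ • z (t - θ)) + w t) →
      IsBddFun z → IsBddFun z' →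
      supNorm z ≤ Minf * supNorm w ∧ supNorm z' ≤ Minfd * supNorm w)
    (M'' : ℝ)
    (hM'' : M'' = Minfd * ((∑ j : Fin J, μ j * ‖Aj j‖)
      + 2 * ∑ ℓ : Fin L, ‖Am ℓ‖))
    (hM''1 : M'' < 1)
    (hsmall : Minf * ε * hNorm *
      (1 + ((∑ j : Fin J, μ j * ‖Aj j‖) + 2 * ∑ ℓ : Fin L, ‖Am ℓ‖)
        * Minfd * (1 - M'')⁻¹) < 1) :
    ∃ C : ℝ, 0 ≤ C ∧
      ∀ u : ℝ → EuclideanSpace ℂ (Fin p), IsBddFun u → (∀ t ≤ (0 : ℝ), u t = 0) →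
      ∀ v v' : ℝ → EuclideanSpace ℂ (Fin n),
        (∀ t, HasDerivAt v (v' t) t) → (∀ t ≤ (0 : ℝ), v t = 0) →
        -- `v` is the neutral nominal solution for `u`
        (∀ t > (0 : ℝ), v' t + ∑ ℓ : Fin L, Am ℓ (v' (t - Hl ℓ))
          = A (v t) + ∑ j : Fin J, Aj j (v (t - hd j))
            + (∫ θ in (0 : ℝ)..D, h θ • v (t - θ))
            + B (u t) + ∑ k : Fin K, Bk k (u (t - T k))) →
        supNorm v ≤ Minfnom * supNorm u → supNorm v' ≤ Minfnomd * supNorm u →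
      ∀ x x' : ℝ → EuclideanSpace ℂ (Fin n),
        (∀ t, HasDerivAt x (x' t) t) → (∀ t ≤ (0 : ℝ), x t = 0) →
        -- `x` solves the neutral time-varying delay system for `u`
        (∀ t > (0 : ℝ), x' t + ∑ ℓ : Fin L, Am ℓ (x' (t - γ ℓ t))
          = A (x t) + ∑ j : Fin J, Aj j (x (t - τ j t))
            + (∫ θ in (0 : ℝ)..(δ t), h θ • x (t - θ))
            + B (u t) + ∑ k : Fin K, Bk k (u (t - σ k t))) →
        IsBddFun x → IsBddFun x' →
        supNorm x ≤ C * supNorm u :=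
  stmt_3_general n p J K L A Aj Am B Bk D ε hε0 hεD hd μ hμ0 T Hl h hcont hNorm hhNorm τ hτb σ γ δ
    hδb Minf Minfd Minfnom Minfnomd hMinf0 hMinfd0 haux M'' hM'' hM''1 hsmall
end

section
/- (Proposition, Section 4.2: finitely many poles of commensurate neutral systems under Hypothesis (H).) Let H > 0, let A, A_1, …, A_J, A_{−1}, …, A_{−L} ∈ M_n(ℂ) with Σ_{ℓ=1}^L ‖A_{−ℓ}‖ < 1 (operator norm), let D ≥ 0 and let h : [0,D] → ℂ be a polynomial function. Define the entire function F : ℂ → ℂ by F(s) = det( sI − A + Σ_{ℓ=1}^L A_{−ℓ} · s · e^{−ℓ H s} − Σ_{j=1}^J A_j e^{−j H s} − ( ∫_0^D h(θ) e^{−θ s} dθ )·I ). Then there exists a real number a < 0 such that the set { s ∈ ℂ : Re s > a and F(s) = 0 } is finite. -/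
/-!
On a right half-plane `a ≤ Re s` the characteristic matrix has the form `s (I + N(s)) - K(s)`,
where `N(s) = Σ A₋ℓ e^{-ℓHs}` and `K(s)` are bounded. Since `Σ ‖A₋ℓ‖ < 1`, `a < 0` can be chosen
so close to `0` that `‖N(s)‖ ≤ r < 1` there; then `‖s‖ (1 - r) > sup ‖K‖` makes the matrix
invertible. So the zeros of the entire function `F` in the half-plane lie in a disc, where there
are only finitely many of them because `F` does not vanish identically.
-/

open Complex Filter Set

lemma norm_cexp_neg_mul_le {a t D : ℝ} {s : ℂ} (ha : a ≤ 0) (hs : a ≤ s.re) (ht : t ∈ Icc 0 D) :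
    ‖cexp (-(t : ℂ) * s)‖ ≤ Real.exp (-(D * a)) := by
  have hre : (-(t : ℂ) * s).re = -(t * s.re) := by simp
  rw [norm_exp, Real.exp_le_exp, hre]
  nlinarith [ht.1, ht.2]

lemma norm_sum_cexp_smul_le {ι E : Type*} [Fintype ι] [NormedAddCommGroup E] [NormedSpace ℂ E]
    {a : ℝ} {s : ℂ} (ha : a ≤ 0) (hs : a ≤ s.re) {τ : ι → ℝ} (hτ : ∀ i, 0 ≤ τ i) (B : ι → E) :
    ‖∑ i, cexp (-(τ i : ℂ) * s) • B i‖ ≤ ∑ i, Real.exp (-(τ i * a)) * ‖B i‖ :=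
  (norm_sum_le _ _).trans <| Finset.sum_le_sum fun i _ => by
    rw [norm_smul]
    gcongr
    exact norm_cexp_neg_mul_le ha hs ⟨hτ i, le_rfl⟩

lemma exists_neg_sum_exp_mul_lt {ι : Type*} [Fintype ι] (τ c : ι → ℝ) (h : ∑ i, c i < 1) :
    ∃ a < 0, ∑ i, Real.exp (-(τ i * a)) * c i < 1 := by
  have hcont : Continuous fun a : ℝ => ∑ i, Real.exp (-(τ i * a)) * c i := by fun_prop
  have h0 : ∑ i, Real.exp (-(τ i * 0)) * c i < 1 := by simpa using h
  obtain ⟨a, ha, ha0⟩ := ((hcont.continuousAt.eventually_lt_const h0).filter_mono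
    nhdsWithin_le_nhds |>.and (self_mem_nhdsWithin (s := Iio (0 : ℝ)))).exists
  exact ⟨a, ha0, ha⟩

lemma norm_integral_mul_cexp_le {f : ℝ → ℂ} {C D a : ℝ} {s : ℂ} (hD : 0 ≤ D)
    (hf : ∀ θ ∈ Icc 0 D, ‖f θ‖ ≤ C) (ha : a ≤ 0) (hs : a ≤ s.re) :
    ‖∫ θ in 0..D, f θ * cexp (-(θ : ℂ) * s)‖ ≤ C * Real.exp (-(D * a)) * D := by
  have hC : 0 ≤ C := (norm_nonneg _).trans (hf 0 ⟨le_rfl, hD⟩)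
  have := intervalIntegral.norm_integral_le_of_norm_le_const (a := 0) (b := D)
    (C := C * Real.exp (-(D * a))) (f := fun θ => f θ * cexp (-(θ : ℂ) * s)) fun θ hθ => by
      rw [uIoc_of_le hD] at hθ
      rw [norm_mul]
      exact mul_le_mul (hf θ (Ioc_subset_Icc_self hθ))
        (norm_cexp_neg_mul_le ha hs (Ioc_subset_Icc_self hθ)) (norm_nonneg _) hC
  rwa [sub_zero, abs_of_nonneg hD] at this

lemma differentiable_integral_mul_cexp {f : ℝ → ℂ} (hf : Continuous f) {D : ℝ} (hD : 0 ≤ D) :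
    Differentiable ℂ fun s => ∫ θ in 0..D, f θ * cexp (-(θ : ℂ) * s) := by
  intro s₀
  obtain ⟨C, hC⟩ := isCompact_Icc.exists_bound_of_continuousOn (hf.continuousOn (s := Icc 0 D))
  set a := min (s₀.re - 1) 0
  have hball : ∀ s ∈ Metric.ball s₀ 1, a ≤ s.re := fun s hs => by
    have := (abs_re_le_norm (s - s₀)).trans (mem_ball_iff_norm.mp hs).le
    rw [sub_re, abs_le] at this
    exact (min_le_left _ _).trans (by linarith)
  refine (intervalIntegral.hasDerivAt_integral_of_dominated_loc_of_deriv_le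
    (F' := fun s θ => f θ * (cexp (-(θ : ℂ) * s) * -(θ : ℂ)))
    (bound := fun _ => C * Real.exp (-(D * a)) * D)
    (Metric.ball_mem_nhds s₀ one_pos) (.of_forall fun s => by fun_prop)
    ((by fun_prop : Continuous _).intervalIntegrable _ _) (by fun_prop)
    (.of_forall fun θ hθ s hs => ?_) intervalIntegrable_const
    (.of_forall fun θ _ s _ => ?_)).2.differentiableAt
  · rw [uIoc_of_le hD] at hθ
    have hθ' := Ioc_subset_Icc_self hθ
    rw [norm_mul, norm_mul, norm_neg, norm_real, Real.norm_of_nonneg hθ'.1, ← mul_assoc]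
    have hC0 : 0 ≤ C := (norm_nonneg _).trans (hC θ hθ')
    gcongr
    · exact hθ'.1
    · exact hC θ hθ'
    · exact norm_cexp_neg_mul_le (min_le_right _ _) (hball s hs) hθ'
    · exact hθ'.2
  · exact ((hasDerivAt_id s).const_mul (-(θ : ℂ)) |>.cexp.const_mul (f θ)).congr_deriv
      (by simp only [id]; ring)

section Operators

variable {𝕜 E : Type*} [NontriviallyNormedField 𝕜] [NormedAddCommGroup E] [NormedSpace 𝕜 E]
  [FiniteDimensional 𝕜 E]

lemma LinearMap.det_smul_id_add_sub_ne_zero {s : 𝕜} {N K : E →L[𝕜] E}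
    (h : ‖K‖ < ‖s‖ * (1 - ‖N‖)) :
    LinearMap.det ((s • (ContinuousLinearMap.id 𝕜 E + N) - K : E →L[𝕜] E) : E →ₗ[𝕜] E) ≠ 0 := by
  intro hdet
  obtain ⟨x, hx, hx0⟩ :=
    (Submodule.ne_bot_iff _).mp (LinearMap.bot_lt_ker_of_det_eq_zero hdet).ne'
  have hKx : s • (x + N x) = K x := by
    simpa [sub_eq_zero] using (LinearMap.mem_ker.mp hx)
  have hx0 : 0 < ‖x‖ := norm_pos_iff.mpr hx0
  have hbound : ‖s‖ * (1 - ‖N‖) * ‖x‖ ≤ ‖K‖ * ‖x‖ := calc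
    ‖s‖ * (1 - ‖N‖) * ‖x‖ = ‖s‖ * (‖x‖ - ‖N‖ * ‖x‖) := by ring
    _ ≤ ‖s‖ * (‖x‖ - ‖N x‖) := by gcongr; exact N.le_opNorm x
    _ ≤ ‖s‖ * ‖x + N x‖ := by gcongr; linarith [norm_le_add_norm_add x (N x)]
    _ = ‖K x‖ := by rw [← hKx, norm_smul]
    _ ≤ ‖K‖ * ‖x‖ := K.le_opNorm x
  exact lt_irrefl _ (h.trans_le (le_of_mul_le_mul_right hbound hx0))

variable [CompleteSpace 𝕜] {G : Type*} [NormedAddCommGroup G] [NormedSpace 𝕜 G]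

lemma Differentiable.linearMap_det {T : G → E →L[𝕜] E} (hT : Differentiable 𝕜 T) :
    Differentiable 𝕜 fun s => LinearMap.det (T s : E →ₗ[𝕜] E) := by
  let b := Module.finBasis 𝕜 E
  have hentry : ∀ i j, Differentiable 𝕜 fun s => LinearMap.toMatrix b b (T s) i j := fun i j => by
    have := differentiable_pi.mp (b.equivFunL.toContinuousLinearMap.differentiable.comp
      (hT.clm_apply (differentiable_const (b j)))) i
    simpa [LinearMap.toMatrix_apply, Module.Basis.equivFunL_apply] using this
  simp_rw [← LinearMap.det_toMatrix b, Matrix.det_apply]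
  fun_prop

end Operators

lemma Differentiable.finite_inter_zeros {f : ℂ → ℂ} (hf : Differentiable ℂ f) {z₀ : ℂ}
    (hz₀ : f z₀ ≠ 0) {K : Set ℂ} (hK : IsCompact K) : (K ∩ f ⁻¹' {0}).Finite := by
  rcases (hf.differentiableOn.analyticOnNhd isOpen_univ)
    |>.eqOn_zero_or_eventually_ne_zero_of_preconnected isPreconnected_univ with hzero | hne
  · exact absurd (hzero (mem_univ z₀)) hz₀
  · convert hK.finite_sdiff_of_mem_codiscreteWithin (codiscreteWithin_mono (subset_univ K) hne)
      using 1
    ext; simp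

theorem finite_zeros_of_eq_det_smul_id_add_sub {E : Type*} [NormedAddCommGroup E]
    [NormedSpace ℂ E] [FiniteDimensional ℂ E] {F : ℂ → ℂ} {N K : ℂ → E →L[ℂ] E}
    (hN : Differentiable ℂ N) (hK : Differentiable ℂ K)
    (hF : ∀ s, F s = LinearMap.det
      ((s • (ContinuousLinearMap.id ℂ E + N s) - K s : E →L[ℂ] E) : E →ₗ[ℂ] E))
    {a r C : ℝ} (hr : r < 1) (hNr : ∀ s : ℂ, a ≤ s.re → ‖N s‖ ≤ r)
    (hKC : ∀ s : ℂ, a ≤ s.re → ‖K s‖ ≤ C) :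
    {s : ℂ | a < s.re ∧ F s = 0}.Finite := by
  set R := C / (1 - r)
  have hne : ∀ s : ℂ, a ≤ s.re → R < ‖s‖ → F s ≠ 0 := fun s hs hsR => by
    rw [hF]
    refine LinearMap.det_smul_id_add_sub_ne_zero ?_
    calc ‖K s‖ ≤ C := hKC s hs
      _ < ‖s‖ * (1 - r) := (div_lt_iff₀ (by linarith)).mp hsR
      _ ≤ ‖s‖ * (1 - ‖N s‖) := by gcongr; exact hNr s hs
  have hFd : Differentiable ℂ F := by
    rw [funext hF]
    exact (differentiable_id.smul (hN.const_add _) |>.sub hK).linearMap_det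
  set z₀ : ℂ := ((|R| + |a| + 1 : ℝ) : ℂ)
  have hz₀ : F z₀ ≠ 0 := hne z₀ (by simp [z₀]; linarith [le_abs_self a, abs_nonneg R])
    (by rw [norm_real, Real.norm_of_nonneg (by positivity)]; linarith [le_abs_self R, abs_nonneg a])
  refine (hFd.finite_inter_zeros hz₀ (isCompact_closedBall 0 R)).subset ?_
  rintro s ⟨hs, hFs⟩
  refine ⟨?_, hFs⟩
  rw [mem_closedBall_zero_iff]
  by_contra! hsR
  exact hne s hs.le hsR hFs

/-- (Proposition, Section 4.2: finitely many poles of commensurate neutral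
systems under Hypothesis (H).)  Let `H > 0`, `Σℓ ‖A₋ℓ‖ < 1`, `D ≥ 0` and let
`h` be a polynomial function on `[0,D]`.  Let
`F(s) = det(sI − A + Σℓ A₋ℓ s e^{−ℓHs} − Σj Aj e^{−jHs} − (∫₀^D h(θ)e^{−θs}dθ)·I)`.
Then there is `a < 0` such that `{s : Re s > a, F(s) = 0}` is finite. -/
theorem stmt_7 (n J L : ℕ) (H : ℝ) (hH : 0 < H)
    (A : EuclideanSpace ℂ (Fin n) →L[ℂ] EuclideanSpace ℂ (Fin n))
    (Aj : Fin J → EuclideanSpace ℂ (Fin n) →L[ℂ] EuclideanSpace ℂ (Fin n))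
    (Am : Fin L → EuclideanSpace ℂ (Fin n) →L[ℂ] EuclideanSpace ℂ (Fin n))
    (hAm : ∑ ℓ, ‖Am ℓ‖ < 1)
    (D : ℝ) (hD : 0 ≤ D)
    (h : ℝ → ℂ) (P : Polynomial ℂ)
    (hP : ∀ θ ∈ Set.Icc (0 : ℝ) D, h θ = P.eval (θ : ℂ))
    (F : ℂ → ℂ)
    (hF : ∀ s : ℂ, F s =
      LinearMap.det
        (((s • ContinuousLinearMap.id ℂ (EuclideanSpace ℂ (Fin n))
          - A
          + ∑ ℓ : Fin L,
              (s * Complex.exp (-((((ℓ : ℕ) + 1 : ℕ) : ℂ) * (H : ℂ)) * s)) • Am ℓ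
          - ∑ j : Fin J,
              Complex.exp (-((((j : ℕ) + 1 : ℕ) : ℂ) * (H : ℂ)) * s) • Aj j
          - (∫ θ in (0 : ℝ)..D, h θ * Complex.exp (-(θ : ℂ) * s)) •
              ContinuousLinearMap.id ℂ (EuclideanSpace ℂ (Fin n))) :
            EuclideanSpace ℂ (Fin n) →L[ℂ] EuclideanSpace ℂ (Fin n)) :
          EuclideanSpace ℂ (Fin n) →ₗ[ℂ] EuclideanSpace ℂ (Fin n))) :
    ∃ a : ℝ, a < 0 ∧ {s : ℂ | a < s.re ∧ F s = 0}.Finite := by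
  set τ : ℕ → ℝ := fun k => ((k + 1 : ℕ) : ℝ) * H
  have hτ : ∀ k, 0 ≤ τ k := fun k => by positivity
  obtain ⟨a, ha, hr⟩ := exists_neg_sum_exp_mul_lt (fun ℓ : Fin L => τ ℓ) (‖Am ·‖) hAm
  have hPc : Continuous fun θ : ℝ => P.eval (θ : ℂ) := by fun_prop
  obtain ⟨Cp, hCp⟩ := isCompact_Icc.exists_bound_of_continuousOn (hPc.continuousOn (s := Icc 0 D))
  have hh : ∀ s : ℂ, ∫ θ in (0 : ℝ)..D, h θ * cexp (-(θ : ℂ) * s)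
      = ∫ θ in (0 : ℝ)..D, P.eval (θ : ℂ) * cexp (-(θ : ℂ) * s) := fun s =>
    intervalIntegral.integral_congr fun θ hθ => by rw [hP θ (by rwa [uIcc_of_le hD] at hθ)]
  refine ⟨a, ha, finite_zeros_of_eq_det_smul_id_add_sub
    (N := fun s => ∑ ℓ : Fin L, cexp (-(τ ℓ : ℂ) * s) • Am ℓ)
    (K := fun s => A + ∑ j : Fin J, cexp (-(τ j : ℂ) * s) • Aj j
      + (∫ θ in (0 : ℝ)..D, P.eval (θ : ℂ) * cexp (-(θ : ℂ) * s)) • ContinuousLinearMap.id ℂ _)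
    (C := ‖A‖ + ∑ j : Fin J, Real.exp (-(τ j * a)) * ‖Aj j‖ + Cp * Real.exp (-(D * a)) * D)
    (by fun_prop) ?_ (fun s => ?_) hr
    (fun s hs => norm_sum_cexp_smul_le ha.le hs (fun _ => hτ _) _) (fun s hs => ?_)⟩
  · exact (differentiable_const A).add (by fun_prop)
      |>.add ((differentiable_integral_mul_cexp hPc hD).smul_const _)
  · rw [hF, hh]
    congr 2
    simp only [τ, smul_add, Finset.smul_sum, smul_smul, ofReal_mul, ofReal_natCast]
    abel
  · refine norm_add₃_le.trans <| add_le_add_three le_rfl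
      (norm_sum_cexp_smul_le ha.le hs (fun _ => hτ _) _) ?_
    rw [norm_smul]
    exact (mul_le_of_le_one_right (norm_nonneg _) ContinuousLinearMap.norm_id_le).trans
      (norm_integral_mul_cexp_le hD hCp ha.le hs)
end

section
/- (Stability of the elementary delay system used in Section 5.) For every real h with 0 ≤ h < π/2 and every s ∈ ℂ with Re s ≥ 0, one has s + e^{−h s} ≠ 0. In other words, the characteristic function of the delay system ẋ(t) + x(t−h) = u(t) has no zeros in the closed right half-plane when 0 ≤ h < π/2. -/
/-!
If `s = -e^{-hs}` with `Re s ≥ 0`, then `|s| = e^{-h Re s} ≤ 1`, so `|Im(-hs)| ≤ h < π/2`.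
Hence `e^{-hs}` lies in the open right half-plane, and `Re s = -Re e^{-hs} < 0`, a contradiction.
-/

open Complex

lemma Complex.norm_exp_neg_ofReal_mul_le_one {h : ℝ} (hh : 0 ≤ h) {s : ℂ} (hs : 0 ≤ s.re) :
    ‖exp (-(h : ℂ) * s)‖ ≤ 1 := by
  rw [norm_exp, Real.exp_le_one_iff]
  simpa [mul_re] using mul_nonneg hh hs

lemma Complex.re_exp_pos_of_abs_im_lt {z : ℂ} (hz : |z.im| < Real.pi / 2) : 0 < (exp z).re := by
  rw [exp_re]
  obtain ⟨him_gt, him_lt⟩ := abs_lt.mp hz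
  exact mul_pos (Real.exp_pos _) (Real.cos_pos_of_mem_Ioo ⟨him_gt, him_lt⟩)

/-- (Stability of the elementary delay system used in Section 5.)
For every real `h` with `0 ≤ h < π/2` and every `s ∈ ℂ` with `Re s ≥ 0`,
one has `s + e^{−h s} ≠ 0`. -/
theorem stmt_14 (h : ℝ) (hh0 : 0 ≤ h) (hhlt : h < Real.pi / 2)
    (s : ℂ) (hs : 0 ≤ s.re) :
    s + Complex.exp (-(h : ℂ) * s) ≠ 0 := by
  intro hzero
  have hs_eq : s = -exp (-(h : ℂ) * s) := eq_neg_of_add_eq_zero_left hzero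
  have hs_norm : ‖s‖ ≤ 1 := by
    rw [hs_eq, norm_neg]
    exact norm_exp_neg_ofReal_mul_le_one hh0 hs
  have him : |(-(h : ℂ) * s).im| < Real.pi / 2 := by
    have : |s.im| ≤ 1 := (abs_im_le_norm s).trans hs_norm
    calc |(-(h : ℂ) * s).im| = h * |s.im| := by simp [mul_im, abs_mul, abs_of_nonneg hh0]
      _ ≤ h := mul_le_of_le_one_right hh0 this
      _ < Real.pi / 2 := hhlt
  have hre : s.re = -(exp (-(h : ℂ) * s)).re := by rw [← neg_re, ← hs_eq]
  linarith [re_exp_pos_of_abs_im_lt him]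
end

section
/- (Stability of the closed loop in the example of Section 5.) For every s ∈ ℂ with Re s ≥ 0, one has s + 1 + e^{−2s} ≠ 0. Consequently the constant feedback controller K = −1 applied to the (unstable) delay system ẋ(t) + x(t−2) = u(t) yields a closed-loop characteristic function with no zeros in the closed right half-plane. -/
/-! On `Re s ≥ 0` the delay term has modulus `exp (-τ Re s) ≤ 1`, while `‖s + 1‖ ≥ Re s + 1 ≥ 1`
with equality only at `s = 0`, where the characteristic function equals `2`. -/

open Complex

theorem Complex.eq_zero_of_norm_add_one_le_one {s : ℂ} (hs : 0 ≤ s.re) (h : ‖s + 1‖ ≤ 1) :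
    s = 0 := by
  have hsq : (s.re + 1) ^ 2 + s.im ^ 2 ≤ 1 := by
    have := Complex.sq_norm (s + 1)
    rw [normSq_apply] at this
    simp only [add_re, one_re, add_im, one_im, add_zero] at this
    nlinarith [norm_nonneg (s + 1)]
  exact Complex.ext (by simp only [zero_re]; nlinarith) (by simp only [zero_im]; nlinarith)

theorem Complex.add_one_add_exp_neg_mul_ne_zero {τ : ℝ} (hτ : 0 ≤ τ) {s : ℂ} (hs : 0 ≤ s.re) :
    s + 1 + exp (-τ * s) ≠ 0 := by
  intro h
  have hexp : ‖exp (-τ * s)‖ ≤ 1 := by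
    rw [norm_exp, Real.exp_le_one_iff]
    simpa using mul_nonneg hτ hs
  have hs1 : ‖s + 1‖ ≤ 1 := by rwa [eq_neg_of_add_eq_zero_left h, norm_neg]
  obtain rfl := eq_zero_of_norm_add_one_le_one hs hs1
  norm_num at h

/-- (Stability of the closed loop in the example of Section 5.)
For every `s ∈ ℂ` with `Re s ≥ 0`, one has `s + 1 + e^{−2s} ≠ 0`. -/
theorem stmt_15 (s : ℂ) (hs : 0 ≤ s.re) :
    s + 1 + Complex.exp (-2 * s) ≠ 0 := by
  simpa using Complex.add_one_add_exp_neg_mul_ne_zero zero_le_two hs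
end
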